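/- Suppose aₙ → a almost everywhere in Q (real-valued measurable functions) and vₙ ⇀ v weakly in L²(Q;ℝ²). Then the anisotropic energy is lower semi-continuous along this sequence: liminf_{n→∞} ∫_Q γ(R(aₙ(z)) vₙ(z)) dz ≥ ∫_Q γ(R(a(z)) v(z)) dz. -/

import Mathlib

open MeasureTheory Filter
open scoped RealInnerProductSpace

/-- The rotation of `ℝ²` through angle `θ`, with matrix `((cos θ, −sin θ), (sin θ, cos θ))`. -/
noncomputable def rot (θ : ℝ) (w : EuclideanSpace ℝ (Fin 2)) : EuclideanSpace ℝ (Fin 2) :=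
  (WithLp.equiv 2 (Fin 2 → ℝ)).symm
    ![Real.cos θ * w 0 - Real.sin θ * w 1, Real.sin θ * w 0 + Real.cos θ * w 1]

/-!
Convexity gives the pointwise bound `γ(R(aₙ)vₙ) ≥ γ(b) + ⟪R(aₙ)vₙ - b, g⟫` with `b = R(a)v` and
`g = ∇γ(b)`, so it suffices that the linear term tends to `0`. Moving the rotation onto the test
function, `⟪R(aₙ)vₙ, g⟫ = ⟪vₙ, R(-aₙ)g⟫`; here `R(-aₙ)g → R(-a)g` strongly in `L²` by dominated
convergence, while `vₙ ⇀ v` weakly, hence boundedly by Banach–Steinhaus, and a weakly convergent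
sequence paired with a strongly convergent one converges. The `L²` bound together with the linear
growth of `γ` also bounds the energies from above.
-/

open Topology

section Rotation

@[simp] lemma rot_apply_zero (θ : ℝ) (w : EuclideanSpace ℝ (Fin 2)) :
    rot θ w 0 = Real.cos θ * w 0 - Real.sin θ * w 1 := rfl

@[simp] lemma rot_apply_one (θ : ℝ) (w : EuclideanSpace ℝ (Fin 2)) :
    rot θ w 1 = Real.sin θ * w 0 + Real.cos θ * w 1 := rfl

lemma inner_rot_left (θ : ℝ) (u w : EuclideanSpace ℝ (Fin 2)) :
    ⟪rot θ u, w⟫ = ⟪u, rot (-θ) w⟫ := by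
  simp only [PiLp.inner_apply, RCLike.inner_apply, conj_trivial, Fin.sum_univ_two,
    rot_apply_zero, rot_apply_one, Real.cos_neg, Real.sin_neg]
  ring

lemma norm_rot (θ : ℝ) (w : EuclideanSpace ℝ (Fin 2)) : ‖rot θ w‖ = ‖w‖ := by
  simp only [EuclideanSpace.norm_eq, Fin.sum_univ_two, Real.norm_eq_abs, sq_abs,
    rot_apply_zero, rot_apply_one]
  congr 1
  linear_combination (w 0 ^ 2 + w 1 ^ 2) * Real.sin_sq_add_cos_sq θ

lemma continuous_rot : Continuous fun p : ℝ × EuclideanSpace ℝ (Fin 2) => rot p.1 p.2 := by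
  refine (PiLp.continuous_toLp 2 _).comp (continuous_pi fun i => ?_)
  fin_cases i <;>
    simp only [Fin.zero_eta, Fin.mk_one, Matrix.cons_val_zero, Matrix.cons_val_one,
      Matrix.cons_val_fin_one] <;>
    fun_prop

lemma memLp_rot {α : Type*} [MeasurableSpace α] {μ : Measure α} {p : ENNReal} {a : α → ℝ}
    {v : α → EuclideanSpace ℝ (Fin 2)} (ha : AEStronglyMeasurable a μ) (hv : MemLp v p μ) :
    MemLp (fun z => rot (a z) (v z)) p μ :=
  hv.of_le (continuous_rot.comp_aestronglyMeasurable (f := fun z => (a z, v z)) (ha.prodMk hv.1))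
    (ae_of_all _ fun _ => (norm_rot _ _).le)

end Rotation

section Convex

variable {E : Type*} [NormedAddCommGroup E] [InnerProductSpace ℝ E] [CompleteSpace E] {f : E → ℝ}

theorem ConvexOn.add_inner_sub_le_of_hasGradientAt (hf : ConvexOn ℝ Set.univ f) {x f' : E}
    (hx : HasGradientAt f f' x) (y : E) : f x + ⟪f', y - x⟫ ≤ f y := by
  let ℓ : ℝ →ᵃ[ℝ] E := AffineMap.lineMap x y
  have hline : ConvexOn ℝ Set.univ (f ∘ ℓ) := by
    simpa using hf.comp_affineMap ℓ
  have hderiv : HasDerivAt (f ∘ ℓ) ⟪f', y - x⟫ 0 := by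
    simpa using hx.hasFDerivAt.comp_hasDerivAt_of_eq 0 AffineMap.hasDerivAt_lineMap
      (AffineMap.lineMap_apply_zero x y).symm
  have := hline.le_slope_of_hasDerivAt (Set.mem_univ 0) (Set.mem_univ 1) zero_lt_one hderiv
  simp only [slope_def_field, Function.comp_apply, AffineMap.lineMap_apply_one,
    AffineMap.lineMap_apply_zero, sub_zero, div_one, ℓ] at this
  linarith

theorem ConvexOn.abs_sub_le_of_norm_gradient_le (hf : ConvexOn ℝ Set.univ f) {f' : E → E}
    (hgrad : ∀ x, HasGradientAt f (f' x) x) {L : ℝ} (hL : ∀ x, ‖f' x‖ ≤ L) (x y : E) :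
    |f y - f x| ≤ L * ‖y - x‖ := by
  have hxy := hf.add_inner_sub_le_of_hasGradientAt (hgrad x) y
  have hyx := hf.add_inner_sub_le_of_hasGradientAt (hgrad y) x
  have h1 := (abs_le.1 (abs_real_inner_le_norm (f' x) (y - x))).1
  have h2 := (abs_le.1 (abs_real_inner_le_norm (f' y) (x - y))).1
  rw [norm_sub_rev] at h2
  have := mul_le_mul_of_nonneg_right (hL x) (norm_nonneg (y - x))
  have := mul_le_mul_of_nonneg_right (hL y) (norm_nonneg (y - x))
  rw [abs_le]; constructor <;> linarith

end Convex

section Hilbert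

variable {H : Type*} [NormedAddCommGroup H] [InnerProductSpace ℝ H] [CompleteSpace H]

theorem exists_norm_le_of_tendsto_inner {u : ℕ → H} {x : H}
    (hu : ∀ y, Tendsto (fun n => ⟪u n, y⟫) atTop (𝓝 ⟪x, y⟫)) : ∃ C, ∀ n, ‖u n‖ ≤ C := by
  obtain ⟨C, hC⟩ := banach_steinhaus (g := fun n => innerSL ℝ (u n)) fun y => by
    obtain ⟨C, hC⟩ := (hu y).norm.bddAbove_range
    exact ⟨C, fun n => hC (Set.mem_range_self n)⟩
  exact ⟨C, fun n => by simpa using hC n⟩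

theorem tendsto_inner_of_tendsto_inner_of_tendsto {u w : ℕ → H} {x y : H}
    (hu : ∀ z, Tendsto (fun n => ⟪u n, z⟫) atTop (𝓝 ⟪x, z⟫)) (hw : Tendsto w atTop (𝓝 y)) :
    Tendsto (fun n => ⟪u n, w n⟫) atTop (𝓝 ⟪x, y⟫) := by
  obtain ⟨C, hC⟩ := exists_norm_le_of_tendsto_inner hu
  have hsmall : Tendsto (fun n => ⟪u n, w n - y⟫) atTop (𝓝 0) := by
    refine squeeze_zero_norm (fun n => ?_)
      (by simpa using (tendsto_sub_nhds_zero_iff.2 hw).norm.const_mul C)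
    exact (norm_inner_le_norm _ _).trans (mul_le_mul_of_nonneg_right (hC n) (norm_nonneg _))
  simpa [inner_sub_right] using (hu y).add hsmall

end Hilbert

section L2

variable {α E : Type*} [MeasurableSpace α] {μ : Measure α} [NormedAddCommGroup E]
  [InnerProductSpace ℝ E]

theorem integral_inner_eq_inner_toLp {f g : α → E} (hf : MemLp f 2 μ) (hg : MemLp g 2 μ) :
    ∫ z, ⟪f z, g z⟫ ∂μ = ⟪hf.toLp f, hg.toLp g⟫ := by
  rw [L2.inner_def]
  refine integral_congr_ae ?_
  filter_upwards [hf.coeFn_toLp, hg.coeFn_toLp] with z hfz hgz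
  rw [hfz, hgz]

theorem MeasureTheory.MemLp.integrable_inner {f g : α → E} (hf : MemLp f 2 μ)
    (hg : MemLp g 2 μ) : Integrable (fun z => ⟪f z, g z⟫) μ := by
  refine (L2.integrable_inner (hf.toLp f) (hg.toLp g)).congr ?_
  filter_upwards [hf.coeFn_toLp, hg.coeFn_toLp] with z hfz hgz
  rw [hfz, hgz]

theorem integral_norm_sq_eq_norm_toLp_sq {f : α → E} (hf : MemLp f 2 μ) :
    ∫ z, ‖f z‖ ^ 2 ∂μ = ‖hf.toLp f‖ ^ 2 := by
  simp_rw [← real_inner_self_eq_norm_sq]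
  exact integral_inner_eq_inner_toLp hf hf

end L2

section Domination

variable {α E : Type*} [MeasurableSpace α] {μ : Measure α} [NormedAddCommGroup E]
  {p : ENNReal} {G : α → ℝ}

theorem unifIntegrable_of_norm_le {ι : Type*} (hp : 1 ≤ p) (hp' : p ≠ ⊤) {f : ι → α → E}
    (hG : MemLp G p μ) (hfG : ∀ i, ∀ᵐ z ∂μ, ‖f i z‖ ≤ G z) : UnifIntegrable f p μ := by
  intro ε hε
  obtain ⟨δ, hδ, hGδ⟩ := hG.eLpNorm_indicator_le hp hp' hε
  refine ⟨δ, hδ, fun i s hs hμs => (eLpNorm_mono_ae ?_).trans (hGδ s hs hμs)⟩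
  filter_upwards [hfG i] with z hz
  by_cases hzs : z ∈ s
  · simpa [hzs] using hz.trans (le_abs_self _)
  · simp [hzs]

theorem tendsto_toLp_of_tendsto_ae_of_norm_le [IsFiniteMeasure μ] [Fact (1 ≤ p)] (hp : p ≠ ⊤)
    {f : ℕ → α → E} {g : α → E} (hf : ∀ n, MemLp (f n) p μ) (hg : MemLp g p μ)
    (hG : MemLp G p μ) (hfG : ∀ n, ∀ᵐ z ∂μ, ‖f n z‖ ≤ G z)
    (hfg : ∀ᵐ z ∂μ, Tendsto (fun n => f n z) atTop (𝓝 (g z))) :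
    Tendsto (fun n => (hf n).toLp (f n)) atTop (𝓝 (hg.toLp g)) := by
  rw [Lp.tendsto_Lp_iff_tendsto_eLpNorm'']
  exact tendsto_Lp_finite_of_tendsto_ae Fact.out hp (fun n => (hf n).1) hg
    (unifIntegrable_of_norm_le Fact.out hp hG hfG) hfg

end Domination

section WeakL2

variable {α E : Type*} [MeasurableSpace α] {μ : Measure α} [NormedAddCommGroup E]
  [InnerProductSpace ℝ E] {vN : ℕ → α → E} {v : α → E}

theorem tendsto_inner_toLp_of_tendsto_integral_inner (hvN : ∀ n, MemLp (vN n) 2 μ)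
    (hv : MemLp v 2 μ) (hweak : ∀ g : α → E, MemLp g 2 μ →
      Tendsto (fun n => ∫ z, ⟪vN n z, g z⟫ ∂μ) atTop (𝓝 (∫ z, ⟪v z, g z⟫ ∂μ)))
    (G : Lp E 2 μ) : Tendsto (fun n => ⟪(hvN n).toLp (vN n), G⟫) atTop (𝓝 ⟪hv.toLp v, G⟫) := by
  have hL2 {w} (hw : MemLp w 2 μ) : ∫ z, ⟪w z, G z⟫ ∂μ = ⟪hw.toLp w, G⟫ := by
    rw [integral_inner_eq_inner_toLp hw (Lp.memLp G), Lp.toLp_coeFn]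
  simpa only [hL2 (hvN _), hL2 hv] using hweak G (Lp.memLp G)

theorem exists_integral_norm_sq_le_of_tendsto_integral_inner [CompleteSpace E]
    (hvN : ∀ n, MemLp (vN n) 2 μ) (hv : MemLp v 2 μ) (hweak : ∀ g : α → E, MemLp g 2 μ →
      Tendsto (fun n => ∫ z, ⟪vN n z, g z⟫ ∂μ) atTop (𝓝 (∫ z, ⟪v z, g z⟫ ∂μ))) :
    ∃ C, ∀ n, ∫ z, ‖vN n z‖ ^ 2 ∂μ ≤ C := by
  obtain ⟨C, hC⟩ :=
    exists_norm_le_of_tendsto_inner (tendsto_inner_toLp_of_tendsto_integral_inner hvN hv hweak)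
  refine ⟨C ^ 2, fun n => ?_⟩
  rw [integral_norm_sq_eq_norm_toLp_sq (hvN n)]
  exact pow_le_pow_left₀ (norm_nonneg _) (hC n) 2

theorem tendsto_integral_inner_of_tendsto_ae [CompleteSpace E] [IsFiniteMeasure μ]
    (hvN : ∀ n, MemLp (vN n) 2 μ) (hv : MemLp v 2 μ) (hweak : ∀ g : α → E, MemLp g 2 μ →
      Tendsto (fun n => ∫ z, ⟪vN n z, g z⟫ ∂μ) atTop (𝓝 (∫ z, ⟪v z, g z⟫ ∂μ)))
    {hN : ℕ → α → E} {h : α → E} {G : α → ℝ} (hhN : ∀ n, MemLp (hN n) 2 μ) (hh : MemLp h 2 μ)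
    (hG : MemLp G 2 μ) (hhG : ∀ n, ∀ᵐ z ∂μ, ‖hN n z‖ ≤ G z)
    (hhh : ∀ᵐ z ∂μ, Tendsto (fun n => hN n z) atTop (𝓝 (h z))) :
    Tendsto (fun n => ∫ z, ⟪vN n z, hN n z⟫ ∂μ) atTop (𝓝 (∫ z, ⟪v z, h z⟫ ∂μ)) := by
  simpa only [integral_inner_eq_inner_toLp (hvN _) (hhN _), integral_inner_eq_inner_toLp hv hh]
    using tendsto_inner_of_tendsto_inner_of_tendsto
      (tendsto_inner_toLp_of_tendsto_integral_inner hvN hv hweak)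
      (tendsto_toLp_of_tendsto_ae_of_norm_le ENNReal.ofNat_ne_top hhN hh hG hhG hhh)

end WeakL2

theorem tendsto_integral_inner_rot {α : Type*} [MeasurableSpace α] {μ : Measure α}
    [IsFiniteMeasure μ] {vN : ℕ → α → EuclideanSpace ℝ (Fin 2)}
    {v : α → EuclideanSpace ℝ (Fin 2)} (hvN : ∀ n, MemLp (vN n) 2 μ) (hv : MemLp v 2 μ)
    (hweak : ∀ g : α → EuclideanSpace ℝ (Fin 2), MemLp g 2 μ →
      Tendsto (fun n => ∫ z, ⟪vN n z, g z⟫ ∂μ) atTop (𝓝 (∫ z, ⟪v z, g z⟫ ∂μ)))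
    {aN : ℕ → α → ℝ} {a : α → ℝ} (haN : ∀ n, AEStronglyMeasurable (aN n) μ)
    (ha : AEStronglyMeasurable a μ) (hae : ∀ᵐ z ∂μ, Tendsto (fun n => aN n z) atTop (𝓝 (a z)))
    {g : α → EuclideanSpace ℝ (Fin 2)} (hg : MemLp g 2 μ) :
    Tendsto (fun n => ∫ z, ⟪rot (aN n z) (vN n z), g z⟫ ∂μ) atTop
      (𝓝 (∫ z, ⟪rot (a z) (v z), g z⟫ ∂μ)) := by
  simp only [inner_rot_left]
  refine tendsto_integral_inner_of_tendsto_ae hvN hv hweak (fun n => memLp_rot (haN n).neg hg)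
    (memLp_rot ha.neg hg) hg.norm (fun n => ae_of_all _ fun z => (norm_rot _ _).le) ?_
  filter_upwards [hae] with z hz
  exact ((continuous_rot.tendsto (-a z, g z)).comp
    (hz.neg.prodMk_nhds (tendsto_const_nhds (x := g z))) :)

section FiniteMeasure

variable {α E : Type*} [MeasurableSpace α] {μ : Measure α} [IsFiniteMeasure μ]
  [NormedAddCommGroup E] {f : E → ℝ} {L : ℝ}

theorem MeasureTheory.Integrable.comp_of_abs_sub_le {u : α → E} (hu : Integrable u μ)
    (hf : Continuous f) (hL : ∀ x, |f x - f 0| ≤ L * ‖x‖) : Integrable (fun z => f (u z)) μ := by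
  refine ((integrable_const |f 0|).add (hu.norm.const_mul L)).mono'
    (hf.comp_aestronglyMeasurable hu.1) (ae_of_all _ fun z => ?_)
  show |f (u z)| ≤ |f 0| + L * ‖u z‖
  linarith [abs_sub_abs_le_abs_sub (f (u z)) (f 0), hL (u z)]

theorem integral_comp_le_of_abs_sub_le (hf : Continuous f) (hL0 : 0 ≤ L)
    (hL : ∀ x, |f x - f 0| ≤ L * ‖x‖) {u : α → E} (hu : MemLp u 2 μ) :
    ∫ z, f (u z) ∂μ ≤ (f 0 + L) * μ.real Set.univ + L * ∫ z, ‖u z‖ ^ 2 ∂μ := by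
  have hsq : Integrable (fun z => ‖u z‖ ^ 2) μ := (memLp_two_iff_integrable_sq_norm hu.1).1 hu
  calc ∫ z, f (u z) ∂μ ≤ ∫ z, (f 0 + L + L * ‖u z‖ ^ 2) ∂μ := by
        refine integral_mono ((hu.integrable one_le_two).comp_of_abs_sub_le hf hL)
          ((integrable_const _).add (hsq.const_mul L)) fun z => ?_
        have := (abs_le.1 (hL (u z))).2
        nlinarith [norm_nonneg (u z), sq_nonneg (‖u z‖ - 1)]
    _ = (f 0 + L) * μ.real Set.univ + L * ∫ z, ‖u z‖ ^ 2 ∂μ := by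
        rw [integral_add (integrable_const _) (hsq.const_mul L), integral_const, integral_const_mul,
          smul_eq_mul, mul_comm]

end FiniteMeasure

theorem ConvexOn.integral_add_integral_inner_sub_le {α E : Type*} [MeasurableSpace α]
    {μ : Measure α} [NormedAddCommGroup E] [InnerProductSpace ℝ E] [CompleteSpace E]
    {f : E → ℝ} {f' : E → E} (hf : ConvexOn ℝ Set.univ f) (hgrad : ∀ x, HasGradientAt f (f' x) x)
    {u w : α → E} (hfu : Integrable (fun z => f (u z)) μ) (hfw : Integrable (fun z => f (w z)) μ)
    (hu : Integrable (fun z => ⟪u z, f' (u z)⟫) μ) (hw : Integrable (fun z => ⟪w z, f' (u z)⟫) μ) :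
    ∫ z, f (u z) ∂μ + (∫ z, ⟪w z, f' (u z)⟫ ∂μ - ∫ z, ⟪u z, f' (u z)⟫ ∂μ) ≤ ∫ z, f (w z) ∂μ := by
  have hwu : Integrable (fun z => ⟪w z, f' (u z)⟫ - ⟪u z, f' (u z)⟫) μ := hw.sub hu
  rw [← integral_sub hw hu, ← integral_add hfu hwu]
  refine integral_mono (hfu.add hwu) hfw fun z => ?_
  rw [← inner_sub_left, real_inner_comm]
  exact hf.add_inner_sub_le_of_hasGradientAt (hgrad (u z)) (w z)

-- Without `hv`, a sequence tending to `+∞` would have the junk `liminf` `0`.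
theorem le_liminf_of_le_of_tendsto {ι : Type*} {l : Filter ι} [l.NeBot] {u v : ι → ℝ} {c : ℝ}
    (huv : ∀ i, u i ≤ v i) (hu : Tendsto u l (𝓝 c)) (hv : ∃ K, ∀ i, v i ≤ K) :
    c ≤ liminf v l := by
  rw [← hu.liminf_eq]
  exact liminf_le_liminf (Eventually.of_forall huv) hu.isBoundedUnder_ge
    (isBoundedUnder_of hv).isCoboundedUnder_ge

theorem stmt15_general (γ : EuclideanSpace ℝ (Fin 2) → ℝ)
    (γ' : EuclideanSpace ℝ (Fin 2) → EuclideanSpace ℝ (Fin 2)) (L₀ L₂ : ℝ)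
    (hconv : ConvexOn ℝ Set.univ γ)
    (hgrad : ∀ x, HasGradientAt γ (γ' x) x)
    (hbdd : ∀ x, ‖γ' x‖ ≤ L₀)
    (hlip : ∀ x y, ‖γ' x - γ' y‖ ≤ L₂ * ‖x - y‖)
    {Q : Type*} [MeasurableSpace Q] (μ : Measure Q) [IsFiniteMeasure μ]
    (aN : ℕ → Q → ℝ) (a : Q → ℝ)
    (haNmeas : ∀ n, Measurable (aN n)) (hameas : Measurable a)
    (hae : ∀ᵐ z ∂μ, Tendsto (fun n => aN n z) atTop (nhds (a z)))
    (vN : ℕ → Q → EuclideanSpace ℝ (Fin 2)) (v : Q → EuclideanSpace ℝ (Fin 2))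
    (hvN : ∀ n, MemLp (vN n) 2 μ) (hv : MemLp v 2 μ)
    (hweak : ∀ g : Q → EuclideanSpace ℝ (Fin 2), MemLp g 2 μ →
      Tendsto (fun n => ∫ z, ⟪vN n z, g z⟫ ∂μ) atTop (nhds (∫ z, ⟪v z, g z⟫ ∂μ))) :
    ∫ z, γ (rot (a z) (v z)) ∂μ
      ≤ liminf (fun n => ∫ z, γ (rot (aN n z) (vN n z)) ∂μ) atTop := by
  have hL₀ : 0 ≤ L₀ := (norm_nonneg _).trans (hbdd 0)
  have hγ : Continuous γ := continuous_iff_continuousAt.2 fun x => (hgrad x).continuousAt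
  have hγ_growth x : |γ x - γ 0| ≤ L₀ * ‖x‖ := by
    simpa using hconv.abs_sub_le_of_norm_gradient_le hgrad hbdd 0 x
  have hγ' : Continuous γ' :=
    (LipschitzWith.of_dist_le' fun x y => by simpa [dist_eq_norm] using hlip x y).continuous
  have hR {θ : Q → ℝ} {w} (hθ : Measurable θ) (hw : MemLp w 2 μ) :=
    memLp_rot hθ.aestronglyMeasurable hw
  have hγR {θ : Q → ℝ} {w} (hθ : Measurable θ) (hw : MemLp w 2 μ) :=
    ((hR hθ hw).integrable one_le_two).comp_of_abs_sub_le hγ hγ_growth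
  have hg : MemLp (fun z => γ' (rot (a z) (v z))) 2 μ :=
    .of_bound (hγ'.comp_aestronglyMeasurable (hR hameas hv).1) L₀ (ae_of_all _ fun z => hbdd _)
  obtain ⟨C, hC⟩ := exists_integral_norm_sq_le_of_tendsto_integral_inner hvN hv hweak
  have hlower n := hconv.integral_add_integral_inner_sub_le hgrad (hγR hameas hv)
    (hγR (haNmeas n) (hvN n)) ((hR hameas hv).integrable_inner hg)
    ((hR (haNmeas n) (hvN n)).integrable_inner hg)
  have hlin := tendsto_integral_inner_rot hvN hv hweak
    (fun n => (haNmeas n).aestronglyMeasurable) hameas.aestronglyMeasurable hae hg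
  have hupper n : ∫ z, γ (rot (aN n z) (vN n z)) ∂μ ≤ (γ 0 + L₀) * μ.real Set.univ + L₀ * C := by
    have := integral_comp_le_of_abs_sub_le hγ hL₀ hγ_growth (hR (haNmeas n) (hvN n))
    simp only [norm_rot] at this
    exact this.trans (by gcongr; exact hC n)
  refine le_liminf_of_le_of_tendsto hlower ?_ ⟨_, hupper⟩
  simpa using tendsto_const_nhds.add (tendsto_sub_nhds_zero_iff.2 hlin)

/-- If `aₙ → a` a.e. in `Q` and `vₙ ⇀ v` weakly in `L²(Q;ℝ²)`, then the anisotropic energy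
is lower semi-continuous along the sequence:
`liminf_n ∫_Q γ(R(aₙ) vₙ) ≥ ∫_Q γ(R(a) v)`. -/
theorem stmt15 (γ : EuclideanSpace ℝ (Fin 2) → ℝ)
    (γ' : EuclideanSpace ℝ (Fin 2) → EuclideanSpace ℝ (Fin 2)) (L₀ L₂ : ℝ)
    (hnonneg : ∀ x, 0 ≤ γ x)
    (hconv : ConvexOn ℝ Set.univ γ)
    (hgrad : ∀ x, HasGradientAt γ (γ' x) x)
    (hbdd : ∀ x, ‖γ' x‖ ≤ L₀)
    (hlip : ∀ x y, ‖γ' x - γ' y‖ ≤ L₂ * ‖x - y‖)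
    (hmin : ∀ x, x ≠ 0 → γ 0 < γ x)
    {Q : Type*} [MeasurableSpace Q] (μ : Measure Q) [IsFiniteMeasure μ]
    (aN : ℕ → Q → ℝ) (a : Q → ℝ)
    (haNmeas : ∀ n, Measurable (aN n)) (hameas : Measurable a)
    (hae : ∀ᵐ z ∂μ, Tendsto (fun n => aN n z) atTop (nhds (a z)))
    (vN : ℕ → Q → EuclideanSpace ℝ (Fin 2)) (v : Q → EuclideanSpace ℝ (Fin 2))
    (hvN : ∀ n, MemLp (vN n) 2 μ) (hv : MemLp v 2 μ)
    (hweak : ∀ g : Q → EuclideanSpace ℝ (Fin 2), MemLp g 2 μ →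
      Tendsto (fun n => ∫ z, ⟪vN n z, g z⟫ ∂μ) atTop (nhds (∫ z, ⟪v z, g z⟫ ∂μ))) :
    ∫ z, γ (rot (a z) (v z)) ∂μ
      ≤ liminf (fun n => ∫ z, γ (rot (aN n z) (vN n z)) ∂μ) atTop :=
  stmt15_general γ γ' L₀ L₂ hconv hgrad hbdd hlip μ aN a haNmeas hameas hae vN v hvN hv hweak
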